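/- arXiv:1709.08324 — 2 statements merged into one kernel-verified Lean document; each statement's English description precedes it below -/
import Mathlib

section
/- For every n ∈ ℕ and parameters p, q, the function y(x) = M_n^{(p,q)}(x) satisfies the second-order differential equation x(x+1) y″(x) + [(2−p)x + (1+q)] y′(x) − n(n+1−p) y(x) = 0 for all x. -/
open MeasureTheory

/-- Pochhammer symbol `(a)_n = a (a+1) ⋯ (a+n−1)`. -/
noncomputable def poch (a : ℂ) (n : ℕ) : ℂ := ∏ i ∈ Finset.range n, (a + i)

/-- Generalized hypergeometric function `ₚF_q(a₁,…,a_p; c₁,…,c_q; x)`. -/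
noncomputable def genHyp (as cs : List ℂ) (x : ℂ) : ℂ :=
  ∑' k : ℕ, ((as.map (fun a => poch a k)).prod / (cs.map (fun c => poch c k)).prod)
    * x ^ k / (Nat.factorial k)

/-- Appell's double hypergeometric function `F₃(a,a′,b,b′;c;x,y)`. -/
noncomputable def appellF3 (a a' b b' c x y : ℂ) : ℂ :=
  ∑' mn : ℕ × ℕ, poch a mn.1 * poch a' mn.2 * poch b mn.1 * poch b' mn.2 /
    (poch c (mn.1 + mn.2) * (Nat.factorial mn.1) * (Nat.factorial mn.2)) * x ^ mn.1 * y ^ mn.2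

/-- Generalized binomial coefficient `binom(a,k) = a(a−1)⋯(a−k+1)/k!`. -/
noncomputable def gbinom (a : ℂ) (k : ℕ) : ℂ := (∏ i ∈ Finset.range k, (a - i)) / (Nat.factorial k)

/-- Jacobi type orthogonal polynomial `M_n^{(p,q)}(x)`. -/
noncomputable def jacobiM (n : ℕ) (p q x : ℂ) : ℂ :=
  (-1) ^ n * (Nat.factorial n) * ∑ k ∈ Finset.range (n + 1),
    gbinom (p - n - 1) k * gbinom (q + n) (n - k) * (-x) ^ k

/-- Left-sided Marichev–Saigo–Maeda fractional integral operator. -/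
noncomputable def msmLeft (δ δ' μ μ' ε : ℂ) (f : ℝ → ℂ) (x : ℝ) : ℂ :=
  (x : ℂ) ^ (-δ) / Complex.Gamma ε *
    ∫ t in Set.Ioo (0 : ℝ) x, ((x - t : ℝ) : ℂ) ^ (ε - 1) * (t : ℂ) ^ (-δ') *
      appellF3 δ δ' μ μ' ε ((1 - t / x : ℝ) : ℂ) ((1 - x / t : ℝ) : ℂ) * f t

/-- Right-sided Marichev–Saigo–Maeda fractional integral operator. -/
noncomputable def msmRight (δ δ' μ μ' ε : ℂ) (f : ℝ → ℂ) (x : ℝ) : ℂ :=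
  (x : ℂ) ^ (-δ') / Complex.Gamma ε *
    ∫ t in Set.Ioi x, ((t - x : ℝ) : ℂ) ^ (ε - 1) * (t : ℂ) ^ (-δ) *
      appellF3 δ δ' μ μ' ε ((1 - t / x : ℝ) : ℂ) ((1 - x / t : ℝ) : ℂ) * f t

/-- Left-sided Saigo fractional integral operator. -/
noncomputable def saigoLeft (δ μ ε : ℂ) (f : ℝ → ℂ) (x : ℝ) : ℂ :=
  (x : ℂ) ^ (-δ - μ) / Complex.Gamma δ *
    ∫ t in Set.Ioo (0 : ℝ) x, ((x - t : ℝ) : ℂ) ^ (δ - 1) *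
      genHyp [δ + μ, -ε] [δ] ((1 - t / x : ℝ) : ℂ) * f t

/-- Right-sided Saigo fractional integral operator. -/
noncomputable def saigoRight (δ μ ε : ℂ) (f : ℝ → ℂ) (x : ℝ) : ℂ :=
  (1 / Complex.Gamma δ) *
    ∫ t in Set.Ioi x, ((t - x : ℝ) : ℂ) ^ (δ - 1) * (t : ℂ) ^ (-δ - μ) *
      genHyp [δ + μ, -ε] [δ] ((1 - x / t : ℝ) : ℂ) * f t

/-- Left-sided Riemann–Liouville fractional integral operator. -/
noncomputable def rlLeft (δ : ℂ) (f : ℝ → ℂ) (x : ℝ) : ℂ :=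
  (1 / Complex.Gamma δ) * ∫ t in Set.Ioo (0 : ℝ) x, ((x - t : ℝ) : ℂ) ^ (δ - 1) * f t

/-- Right-sided Riemann–Liouville fractional integral operator. -/
noncomputable def rlRight (δ : ℂ) (f : ℝ → ℂ) (x : ℝ) : ℂ :=
  (1 / Complex.Gamma δ) * ∫ t in Set.Ioi x, ((t - x : ℝ) : ℂ) ^ (δ - 1) * f t

/-- Left-sided Erdélyi–Kober fractional integral operator `I⁺_{ε,δ}`. -/
noncomputable def ekLeft (ε δ : ℂ) (f : ℝ → ℂ) (x : ℝ) : ℂ :=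
  (x : ℂ) ^ (-δ - ε) / Complex.Gamma δ *
    ∫ t in Set.Ioo (0 : ℝ) x, ((x - t : ℝ) : ℂ) ^ (δ - 1) * (t : ℂ) ^ ε * f t

/-- Right-sided Erdélyi–Kober fractional integral operator `K⁻_{ε,δ}`. -/
noncomputable def ekRight (ε δ : ℂ) (f : ℝ → ℂ) (x : ℝ) : ℂ :=
  (x : ℂ) ^ ε / Complex.Gamma δ *
    ∫ t in Set.Ioi x, ((t - x : ℝ) : ℂ) ^ (δ - 1) * (t : ℂ) ^ (-δ - ε) * f t

/-- Left-sided Marichev–Saigo–Maeda fractional derivative operator. -/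
noncomputable def msmDLeft (δ δ' μ μ' ε : ℂ) (f : ℝ → ℂ) (x : ℝ) : ℂ :=
  iteratedDeriv (⌊ε.re⌋ + 1).toNat
    (msmLeft (-δ') (-δ) (-μ' + ((⌊ε.re⌋ + 1 : ℤ) : ℂ)) (-μ) (-ε + ((⌊ε.re⌋ + 1 : ℤ) : ℂ)) f) x

/-- Right-sided Marichev–Saigo–Maeda fractional derivative operator. -/
noncomputable def msmDRight (δ δ' μ μ' ε : ℂ) (f : ℝ → ℂ) (x : ℝ) : ℂ :=
  (-1 : ℂ) ^ (⌊ε.re⌋ + 1).toNat * iteratedDeriv (⌊ε.re⌋ + 1).toNat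
    (msmRight (-δ') (-δ) (-μ') (-μ + ((⌊ε.re⌋ + 1 : ℤ) : ℂ)) (-ε + ((⌊ε.re⌋ + 1 : ℤ) : ℂ)) f) x

/-!
`M_n^{(p,q)}` is a polynomial whose coefficients `c_k` satisfy
`(k + 1)(k + q + 1) c_{k+1} = (n - k)(k + n + 1 - p) c_k` for all `k` (from the ratio of consecutive
generalized binomial coefficients, and `c_{n+1} = 0`), while the operator
`x(x + 1)D² + ((2 - p)x + 1 + q)D - n(n + 1 - p)` sends `∑ c_k x^k` to
`∑ ((k - n)(k + n + 1 - p) c_k + (k + 1)(k + q + 1) c_{k+1}) x^k`.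
-/

open Polynomial

namespace Polynomial

variable {R : Type*} [CommRing R]

theorem coeff_X_mul_derivative (P : R[X]) (k : ℕ) :
    (X * derivative P).coeff k = k * P.coeff k := by
  cases k with
  | zero => simp
  | succ k => rw [coeff_X_mul, coeff_derivative]; push_cast; ring

theorem hypergeometric_ode_eq_zero (P : R[X]) (a b e : R)
    (hP : ∀ k : ℕ, ((k : R) + 1) * (k + b) * P.coeff (k + 1)
      + ((k : R) * k + (a - 1) * k + e) * P.coeff k = 0) :
    X * (X + 1) * derivative (derivative P) + (C a * X + C b) * derivative P + C e * P = 0 := by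
  -- with `θ = X D` the operator is `θ² + (a - 1)θ + e + D(θ + b - 1)`
  have hθ : X * (X + 1) * derivative (derivative P) + (C a * X + C b) * derivative P + C e * P
      = X * derivative (X * derivative P) + C (a - 1) * (X * derivative P) + C e * P
        + derivative (X * derivative P) + C (b - 1) * derivative P := by
    simp only [derivative_mul, derivative_X, C_sub, C_1]
    ring
  ext k
  rw [hθ]
  simp only [coeff_add, coeff_C_mul, coeff_X_mul_derivative, coeff_derivative, coeff_zero]
  push_cast
  linear_combination hP k

end Polynomial

theorem gbinom_succ (a : ℂ) (k : ℕ) : ((k : ℂ) + 1) * gbinom a (k + 1) = (a - k) * gbinom a k := by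
  have hk : ((Nat.factorial k : ℕ) : ℂ) ≠ 0 := Nat.cast_ne_zero.mpr (Nat.factorial_ne_zero k)
  have hk1 : (k : ℂ) + 1 ≠ 0 := Nat.cast_add_one_ne_zero k
  simp only [gbinom, Finset.prod_range_succ, Nat.factorial_succ]
  push_cast
  field_simp

noncomputable def jacobiMCoeff (n : ℕ) (p q : ℂ) (k : ℕ) : ℂ :=
  (-1) ^ (n + k) * (Nat.factorial n) * gbinom (p - n - 1) k * gbinom (q + n) (n - k)

noncomputable def jacobiMPoly (n : ℕ) (p q : ℂ) : ℂ[X] :=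
  ∑ k ∈ Finset.range (n + 1), C (jacobiMCoeff n p q k) * X ^ k

theorem eval_jacobiMPoly (n : ℕ) (p q x : ℂ) : (jacobiMPoly n p q).eval x = jacobiM n p q x := by
  simp only [jacobiMPoly, jacobiM, jacobiMCoeff, eval_finsetSum, eval_mul, eval_C, eval_pow,
    eval_X, Finset.mul_sum, neg_pow x, pow_add]
  exact Finset.sum_congr rfl fun k _ => by ring

theorem coeff_jacobiMPoly (n : ℕ) (p q : ℂ) (k : ℕ) :
    (jacobiMPoly n p q).coeff k = if k ≤ n then jacobiMCoeff n p q k else 0 := by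
  simp [jacobiMPoly, finsetSum_coeff]

theorem jacobiMCoeff_recurrence (p q : ℂ) {n k : ℕ} (hk : k < n) :
    ((k : ℂ) + 1) * (k + q + 1) * jacobiMCoeff n p q (k + 1)
      + (k - n) * (k + n + 1 - p) * jacobiMCoeff n p q k = 0 := by
  obtain ⟨m, rfl⟩ := Nat.exists_eq_add_of_lt hk
  have h₁ := gbinom_succ (p - (k + m + 1 : ℕ) - 1) k
  have h₂ := gbinom_succ (q + (k + m + 1 : ℕ)) m
  simp only [jacobiMCoeff, show k + m + 1 - (k + 1) = m by omega,
    show k + m + 1 - k = m + 1 by omega]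
  push_cast at h₁ h₂ ⊢
  linear_combination
    (-(-1) ^ (k + m + 1 + k) * ((k + m + 1).factorial : ℂ) * (k + q + 1)
        * gbinom (q + (k + m + 1)) m) * h₁
      - (-1) ^ (k + m + 1 + k) * ((k + m + 1).factorial : ℂ) * (2 * k + m + 2 - p)
        * gbinom (p - (k + m + 1) - 1) k * h₂

theorem coeff_jacobiMPoly_recurrence (n : ℕ) (p q : ℂ) (k : ℕ) :
    ((k : ℂ) + 1) * (k + q + 1) * (jacobiMPoly n p q).coeff (k + 1)
      + (k - n) * (k + n + 1 - p) * (jacobiMPoly n p q).coeff k = 0 := by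
  simp only [coeff_jacobiMPoly]
  rcases lt_trichotomy k n with hk | rfl | hk
  · simpa [show k + 1 ≤ n by omega, hk.le] using jacobiMCoeff_recurrence p q hk
  · simp
  · simp [show ¬ k ≤ n by omega, show ¬ k + 1 ≤ n by omega]

/-- The Jacobi type polynomial satisfies a second-order differential equation. -/
theorem jacobiM_ode (n : ℕ) (p q : ℂ) (x : ℂ) :
    x * (x + 1) * iteratedDeriv 2 (jacobiM n p q) x +
      ((2 - p) * x + (1 + q)) * deriv (jacobiM n p q) x -
      (n : ℂ) * ((n : ℂ) + 1 - p) * jacobiM n p q x = 0 := by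
  have hf : jacobiM n p q = fun y => (jacobiMPoly n p q).eval y :=
    funext fun y => (eval_jacobiMPoly n p q y).symm
  have hode := congrArg (eval x) <| hypergeometric_ode_eq_zero (jacobiMPoly n p q) (2 - p) (1 + q)
    (-(n * (n + 1 - p))) fun k => by
      linear_combination coeff_jacobiMPoly_recurrence n p q k
  have hd (P : ℂ[X]) : deriv (fun y => P.eval y) = fun y => P.derivative.eval y :=
    funext fun y => P.deriv
  rw [hf, iteratedDeriv_succ, iteratedDeriv_one, hd, hd]
  simp only [eval_add, eval_mul, eval_X, eval_C, eval_one, eval_zero] at hode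
  linear_combination hode
end

section
/- Let n ∈ ℕ, let p, q be real parameters with q > −1, and let δ, τ ∈ ℂ with Re(δ) > 0 and Re(τ) > 0. Then for x > 0, the left-sided Riemann–Liouville fractional integral satisfies (I₀₊^{δ} t^{τ−1} M_n^{(p,q)}(t))(x) = (−1)^n Γ(1+q+n) Γ(τ) / [Γ(1+q) Γ(τ+δ)] · x^{τ+δ−1} · ₃F₂(1+n−p, −n, τ; 1+q, τ+δ; −x). -/
open MeasureTheory

/-! Expanding `M_n^{(p,q)}` in Pochhammer symbols gives the terminating series
`M_n^{(p,q)}(t) = (-1)^n (1+q)_n ₂F₁(1+n-p, -n; 1+q; -t)`. The Riemann–Liouville integral acts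
on each monomial by the beta integral, `I^δ t^{τ+k-1} = Γ(τ+k)/Γ(τ+k+δ) x^{τ+k+δ-1}`, and
`Γ(τ+k)/Γ(τ+δ+k) = Γ(τ)(τ)_k / (Γ(τ+δ)(τ+δ)_k)` raises the series to the stated `₃F₂`. -/

open Finset
open scoped Nat

lemma poch_eq_eval_ascPochhammer (a : ℂ) (k : ℕ) : poch a k = (ascPochhammer ℂ k).eval a := by
  induction k with
  | zero => simp [poch]
  | succ k ih => rw [poch, prod_range_succ, ← poch, ih, ascPochhammer_succ_eval]

lemma poch_add (a : ℂ) (k m : ℕ) : poch a (k + m) = poch a k * poch (a + k) m := by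
  simp only [poch, prod_range_add, Nat.cast_add, add_assoc]

lemma poch_ne_zero {a : ℂ} (ha : ∀ m : ℕ, a ≠ -m) (k : ℕ) : poch a k ≠ 0 := by
  rw [poch_eq_eval_ascPochhammer, Ne, ascPochhammer_eval_eq_zero_iff]
  rintro ⟨m, -, hm⟩
  exact ha m (by rw [hm, neg_neg])

lemma poch_neg_natCast_eq_zero {n k : ℕ} (h : n < k) : poch (-n) k = 0 := by
  rw [poch_eq_eval_ascPochhammer]
  exact ascPochhammer_eval_neg_coe_nat_of_lt h

lemma factorial_eq_neg_one_pow_mul_poch_mul_factorial {n k : ℕ} (hk : k ≤ n) :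
    (n ! : ℂ) = (-1) ^ k * poch (-n) k * (n - k)! := by
  rw [poch_eq_eval_ascPochhammer, ascPochhammer_eval_neg_eq_descPochhammer,
    descPochhammer_eval_eq_descFactorial, ← Nat.factorial_mul_descFactorial hk, Nat.cast_mul,
    ← mul_assoc, ← pow_add, ← two_mul, pow_mul, neg_one_sq, one_pow, one_mul, mul_comm]

lemma gbinom_eq_neg_one_pow_mul_poch (a : ℂ) (k : ℕ) :
    gbinom a k = (-1) ^ k * poch (-a) k / k ! := by
  rw [gbinom, poch_eq_eval_ascPochhammer, ascPochhammer_eval_neg_eq_descPochhammer,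
    descPochhammer_eval_eq_prod_range, ← mul_assoc, ← pow_add, ← two_mul, pow_mul, neg_one_sq,
    one_pow, one_mul]

lemma gbinom_eq_poch (a : ℂ) (k : ℕ) : gbinom a k = poch (a - k + 1) k / k ! := by
  rw [gbinom, poch_eq_eval_ascPochhammer, ← descPochhammer_eval_eq_ascPochhammer,
    descPochhammer_eval_eq_prod_range]

lemma ne_neg_natCast_of_re_pos {z : ℂ} (hz : 0 < z.re) (m : ℕ) : z ≠ -m := by
  rintro rfl
  simp only [Complex.neg_re, Complex.natCast_re, Left.neg_pos_iff] at hz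
  exact (Nat.cast_nonneg m).not_gt hz

lemma Gamma_add_nat_eq_poch_mul {z : ℂ} (hz : ∀ m : ℕ, z ≠ -m) (k : ℕ) :
    Complex.Gamma (z + k) = poch z k * Complex.Gamma z := by
  rw [poch_eq_eval_ascPochhammer, ← Complex.Gamma_add_nat_div_Gamma_eq z hz,
    div_mul_cancel₀ _ (Complex.Gamma_ne_zero hz)]

theorem genHyp_eq_sum_range {as : List ℂ} {n : ℕ} (h : -(n : ℂ) ∈ as) (cs : List ℂ) (x : ℂ) :
    genHyp as cs x = ∑ k ∈ range (n + 1),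
      (as.map (poch · k)).prod / (cs.map (poch · k)).prod * x ^ k / k ! := by
  refine tsum_eq_sum fun k hk => ?_
  have hk : n < k := by simpa using hk
  rw [List.prod_eq_zero (List.mem_map.2 ⟨_, h, poch_neg_natCast_eq_zero hk⟩)]
  simp

lemma factorial_mul_gbinom_mul_gbinom {n k : ℕ} (hkn : k ≤ n) (p : ℂ) {q : ℂ}
    (hq : ∀ m : ℕ, 1 + q ≠ -m) :
    n ! * gbinom (p - n - 1) k * gbinom (q + n) (n - k) =
      poch (1 + q) n * poch (1 + n - p) k * poch (-n) k / (poch (1 + q) k * k !) := by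
  have hsplit : poch (1 + q) n = poch (1 + q) k * poch (q + n - (n - k : ℕ) + 1) (n - k) := by
    rw [← Nat.add_sub_cancel' hkn, poch_add, Nat.add_sub_cancel' hkn, Nat.cast_sub hkn]
    ring_nf
  rw [gbinom_eq_neg_one_pow_mul_poch, gbinom_eq_poch, hsplit,
    factorial_eq_neg_one_pow_mul_poch_mul_factorial hkn,
    show -(p - n - 1) = 1 + n - p by ring]
  have := poch_ne_zero hq k
  have : ((n - k)! : ℂ) ≠ 0 := by exact_mod_cast (n - k).factorial_ne_zero
  field_simp
  rw [← pow_mul, pow_mul', neg_one_sq, one_pow, one_mul]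

theorem jacobiM_eq_sum (n : ℕ) (p : ℂ) {q : ℂ} (hq : ∀ m : ℕ, 1 + q ≠ -m) (x : ℂ) :
    jacobiM n p q x = (-1) ^ n * poch (1 + q) n * ∑ k ∈ range (n + 1),
      poch (1 + n - p) k * poch (-n) k / (poch (1 + q) k * k !) * (-x) ^ k := by
  rw [jacobiM, mul_sum, mul_sum]
  refine sum_congr rfl fun k hk => ?_
  linear_combination (-1) ^ n * (-x) ^ k *
    factorial_mul_gbinom_mul_gbinom (Nat.lt_succ_iff.mp (mem_range.mp hk)) p hq

section RiemannLiouville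

variable {δ : ℂ} {x : ℝ}

lemma rlLeft_congr {f g : ℝ → ℂ} (h : Set.EqOn f g (Set.Ioo 0 x)) :
    rlLeft δ f x = rlLeft δ g x := by
  rw [rlLeft, rlLeft, setIntegral_congr_fun measurableSet_Ioo fun t ht => by rw [h ht]]

lemma rlLeft_const_mul (c : ℂ) (f : ℝ → ℂ) :
    rlLeft δ (fun t => c * f t) x = c * rlLeft δ f x := by
  simp only [rlLeft, mul_left_comm _ c, integral_const_mul]

lemma rlLeft_finset_sum {ι : Type*} (s : Finset ι) {f : ι → ℝ → ℂ}
    (hf : ∀ i ∈ s, IntegrableOn (fun t => ((x - t : ℝ) : ℂ) ^ (δ - 1) * f i t) (Set.Ioo 0 x)) :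
    rlLeft δ (fun t => ∑ i ∈ s, f i t) x = ∑ i ∈ s, rlLeft δ (f i) x := by
  simp only [rlLeft, mul_sum]
  rw [integral_finsetSum s hf, mul_sum]

lemma integrableOn_sub_cpow_mul_cpow {u v : ℂ} (hu : 0 < u.re) (hv : 0 < v.re) (hx : 0 < x) :
    IntegrableOn (fun t : ℝ => ((x - t : ℝ) : ℂ) ^ (u - 1) * (t : ℂ) ^ (v - 1)) (Set.Ioo 0 x) := by
  have hbeta := ((Complex.betaIntegral_convergent hv hu).comp_mul_left (c := x⁻¹)).const_mul
    ((x : ℂ) ^ (u - 1) * (x : ℂ) ^ (v - 1))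
  rw [zero_div, one_div, inv_inv, intervalIntegrable_iff_integrableOn_Ioo_of_le hx.le] at hbeta
  refine hbeta.congr_fun (fun t ⟨ht0, htx⟩ => ?_) measurableSet_Ioo
  have hxt : 0 ≤ 1 - x⁻¹ * t := by
    rw [sub_nonneg, inv_mul_le_iff₀ hx, mul_one]; exact htx.le
  beta_reduce
  rw [show (1 : ℂ) - ((x⁻¹ * t : ℝ) : ℂ) = ((1 - x⁻¹ * t : ℝ) : ℂ) by push_cast; ring,
    mul_comm ((x : ℂ) ^ (u - 1)), mul_mul_mul_comm,
    ← Complex.mul_cpow_ofReal_nonneg hx.le (by positivity),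
    ← Complex.mul_cpow_ofReal_nonneg hx.le hxt, mul_comm, ← Complex.ofReal_mul,
    ← Complex.ofReal_mul, mul_inv_cancel_left₀ hx.ne', mul_sub, mul_one, mul_inv_cancel_left₀ hx.ne']

lemma setIntegral_Ioo_sub_cpow_mul_cpow {u v : ℂ} (hu : 0 < u.re) (hv : 0 < v.re) (hx : 0 < x) :
    ∫ t in Set.Ioo 0 x, ((x - t : ℝ) : ℂ) ^ (u - 1) * (t : ℂ) ^ (v - 1) =
      Complex.Gamma u * Complex.Gamma v / Complex.Gamma (u + v) * (x : ℂ) ^ (u + v - 1) := by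
  have hbeta : ∫ t in Set.Ioo 0 x, ((x - t : ℝ) : ℂ) ^ (u - 1) * (t : ℂ) ^ (v - 1) =
      ∫ t in 0..x, (t : ℂ) ^ (v - 1) * ((x : ℂ) - t) ^ (u - 1) := by
    rw [intervalIntegral.integral_of_le hx.le, ← integral_Ioc_eq_integral_Ioo]
    refine setIntegral_congr_fun measurableSet_Ioc fun t _ => ?_
    push_cast
    ring
  have hΓ : Complex.Gamma (u + v) ≠ 0 := Complex.Gamma_ne_zero_of_re_pos (by
    rw [Complex.add_re]; positivity)
  rw [hbeta, Complex.betaIntegral_scaled v u hx, Complex.betaIntegral_symm,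
    Complex.Gamma_mul_Gamma_eq_betaIntegral hu hv, add_comm v u]
  field_simp

lemma rlLeft_cpow (hδ : 0 < δ.re) {s : ℂ} (hs : 0 < s.re) (hx : 0 < x) :
    rlLeft δ (fun t => (t : ℂ) ^ (s - 1)) x =
      Complex.Gamma s / Complex.Gamma (s + δ) * (x : ℂ) ^ (s + δ - 1) := by
  rw [rlLeft, setIntegral_Ioo_sub_cpow_mul_cpow hδ hs hx, add_comm δ s]
  field_simp [Complex.Gamma_ne_zero_of_re_pos hδ]

theorem rlLeft_cpow_mul_sum (hδ : 0 < δ.re) {τ : ℂ} (hτ : 0 < τ.re) (hx : 0 < x)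
    (s : Finset ℕ) (c : ℕ → ℂ) :
    rlLeft δ (fun t => (t : ℂ) ^ (τ - 1) * ∑ k ∈ s, c k * (t : ℂ) ^ k) x =
      Complex.Gamma τ / Complex.Gamma (τ + δ) * (x : ℂ) ^ (τ + δ - 1) *
        ∑ k ∈ s, c k * poch τ k / poch (τ + δ) k * (x : ℂ) ^ k := by
  have hτk (k : ℕ) : 0 < (τ + k).re := by
    rw [Complex.add_re, Complex.natCast_re]; positivity
  have hτδ : 0 < (τ + δ).re := by rw [Complex.add_re]; positivity
  have hmonomial : Set.EqOn (fun t : ℝ => (t : ℂ) ^ (τ - 1) * ∑ k ∈ s, c k * (t : ℂ) ^ k)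
      (fun t => ∑ k ∈ s, c k * (t : ℂ) ^ (τ + k - 1)) (Set.Ioo 0 x) := fun t ht => by
    simp only [mul_sum]
    refine sum_congr rfl fun k _ => ?_
    rw [show τ + k - 1 = τ - 1 + k by ring,
      Complex.cpow_add _ _ (Complex.ofReal_ne_zero.mpr ht.1.ne'), Complex.cpow_natCast]
    ring
  rw [rlLeft_congr hmonomial, rlLeft_finset_sum s fun k _ =>
    IntegrableOn.congr_fun ((integrableOn_sub_cpow_mul_cpow hδ (hτk k) hx).const_mul (c k))
      (fun t _ => mul_left_comm _ _ _) measurableSet_Ioo, mul_sum]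
  refine sum_congr rfl fun k _ => ?_
  rw [rlLeft_const_mul, rlLeft_cpow hδ (hτk k) hx,
    Gamma_add_nat_eq_poch_mul (ne_neg_natCast_of_re_pos hτ),
    show τ + k + δ = τ + δ + k by ring,
    Gamma_add_nat_eq_poch_mul (ne_neg_natCast_of_re_pos hτδ),
    show τ + δ + k - 1 = τ + δ - 1 + k by ring,
    Complex.cpow_add _ _ (Complex.ofReal_ne_zero.mpr hx.ne'), Complex.cpow_natCast]
  have := poch_ne_zero (ne_neg_natCast_of_re_pos hτδ) k
  have := Complex.Gamma_ne_zero_of_re_pos hτδ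
  field_simp

end RiemannLiouville

/-- Corollary 2: Riemann–Liouville left-sided fractional integral of the Jacobi type
polynomial. -/
theorem rlLeft_jacobiM (n : ℕ) (p q : ℝ) (hq : -1 < q) (δ τ : ℂ)
    (hδ : 0 < δ.re) (hτ : 0 < τ.re) (x : ℝ) (hx : 0 < x) :
    rlLeft δ (fun t => (t : ℂ) ^ (τ - 1) * jacobiM n p q t) x =
      (-1) ^ n * Complex.Gamma (1 + (q : ℂ) + n) * Complex.Gamma τ /
        (Complex.Gamma (1 + (q : ℂ)) * Complex.Gamma (τ + δ)) *
        (x : ℂ) ^ (τ + δ - 1) *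
        genHyp [1 + (n : ℂ) - p, -(n : ℂ), τ] [1 + (q : ℂ), τ + δ] (-(x : ℂ)) := by
  have hq' : ∀ m : ℕ, 1 + (q : ℂ) ≠ -m := ne_neg_natCast_of_re_pos (by
    simp only [Complex.add_re, Complex.one_re, Complex.ofReal_re]; linarith)
  have hΓ : Complex.Gamma (1 + q + n) / Complex.Gamma (1 + q) = poch (1 + q) n := by
    rw [Gamma_add_nat_eq_poch_mul hq', mul_div_cancel_right₀ _ (Complex.Gamma_ne_zero hq')]
  set coeff : ℕ → ℂ := fun k => poch (1 + n - p) k * poch (-n) k / (poch (1 + q) k * k !)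
  have hM (t : ℝ) : jacobiM n p q t =
      (-1) ^ n * poch (1 + q) n * ∑ k ∈ range (n + 1), coeff k * (-1) ^ k * (t : ℂ) ^ k := by
    simp only [jacobiM_eq_sum n p hq', coeff, neg_pow (t : ℂ), mul_assoc]
  calc rlLeft δ (fun t => (t : ℂ) ^ (τ - 1) * jacobiM n p q t) x
      = (-1) ^ n * poch (1 + q) n * rlLeft δ (fun t => (t : ℂ) ^ (τ - 1) *
          ∑ k ∈ range (n + 1), coeff k * (-1) ^ k * (t : ℂ) ^ k) x := by
        rw [← rlLeft_const_mul]
        exact congrArg (rlLeft δ · x) (funext fun t => by rw [hM, mul_left_comm])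
    _ = _ := by
        rw [rlLeft_cpow_mul_sum hδ hτ hx, genHyp_eq_sum_range (n := n) (by simp), ← hΓ,
          mul_sum, mul_sum, mul_sum]
        refine sum_congr rfl fun k _ => ?_
        simp only [coeff, List.map_cons, List.map_nil, List.prod_cons, List.prod_nil, mul_one,
          neg_pow (x : ℂ)]
        ring
end
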